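/- arXiv:1808.04209 — 6 statements merged into one kernel-verified Lean document; each statement's English description precedes it below -/
import Mathlib

section
/- Let ρ_S be a density matrix on Fin s, ρ_R a density matrix on Fin r, and E_S : Fin s → ℤ, E_R : Fin r → ℤ energy functions. Then the mutual asymmetry equals the entropy gap between local and global dephasing of the product state: A(ρ_S) + A(ρ_R) − A(ρ_S ⊗ ρ_R) = S(Δ(ρ_S ⊗ ρ_R)) − S(Π(ρ_S ⊗ ρ_R)). -/
/-!
Entropy is additive on product states: the eigenvalues of `A ⊗ B` are the products `λᵢ μⱼ`, and
`η(xy) = y η(x) + x η(y)`, so summing against `∑ λᵢ = tr A = 1` and `∑ μⱼ = tr B = 1` gives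
`S(A ⊗ B) = S(A) + S(B)`. Local dephasing of a product state is the product of the local
dephasings, which are again Hermitian of trace one. Hence `S(ρ_S ⊗ ρ_R)` and `S(Δ(ρ_S ⊗ ρ_R))`
both split, and the identity is a rearrangement of the definitions of the asymmetries.
-/

open Matrix Kronecker BigOperators ComplexOrder

/-- η(x) = −x·log x -/
noncomputable def entEta (x : ℝ) : ℝ := -x * Real.log x

/-- von Neumann entropy S(ρ) = ∑ η(λ_i(ρ)) using the eigenvalues from the
spectral theorem for Hermitian matrices. -/
noncomputable def vnEntropy {n : Type*} [Fintype n] [DecidableEq n] (ρ : Matrix n n ℂ) : ℝ :=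
  if h : ρ.IsHermitian then ∑ i, entEta (h.eigenvalues i) else 0

/-- A density matrix: Hermitian, positive semidefinite, trace one. -/
def IsDensityMatrix {n : Type*} [Fintype n] [DecidableEq n] (ρ : Matrix n n ℂ) : Prop :=
  ρ.IsHermitian ∧ ρ.PosSemidef ∧ ρ.trace = 1

/-- Pinching of a matrix by a function `f` on the index set. -/
def pinch {I : Type*} {α : Type*} [DecidableEq α] (f : I → α) (M : Matrix I I ℂ) :
    Matrix I I ℂ :=
  Matrix.of fun i j => if f i = f j then M i j else 0

/-- Relative entropy of asymmetry A(ρ) = S(P_f ρ) − S(ρ). -/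
noncomputable def asym {I : Type*} [Fintype I] [DecidableEq I] {α : Type*} [DecidableEq α]
    (f : I → α) (ρ : Matrix I I ℂ) : ℝ :=
  vnEntropy (pinch f ρ) - vnEntropy ρ

/-- Energy function of the global dephasing Π. -/
def globalE {s r : ℕ} (ES : Fin s → ℤ) (ER : Fin r → ℤ) : Fin s × Fin r → ℤ :=
  fun p => ES p.1 + ER p.2

/-- Energy function of the local dephasing Δ. -/
def localE {s r : ℕ} (ES : Fin s → ℤ) (ER : Fin r → ℤ) : Fin s × Fin r → ℤ × ℤ :=
  fun p => (ES p.1, ER p.2)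

open Polynomial in
theorem Matrix.IsHermitian.sum_comp_eigenvalues_eq_of_charpoly_eq {n ι : Type*} [Fintype n]
    [DecidableEq n] [Fintype ι] {A : Matrix n n ℂ} (hA : A.IsHermitian) {d : ι → ℝ}
    (h : A.charpoly = ∏ i, (X - C (d i : ℂ))) (g : ℝ → ℝ) :
    ∑ i, g (hA.eigenvalues i) = ∑ i, g (d i) := by
  have hroots : (Finset.univ.val.map hA.eigenvalues).map (RCLike.ofReal : ℝ → ℂ) =
      (Finset.univ.val.map d).map (RCLike.ofReal : ℝ → ℂ) := by
    rw [Multiset.map_map, Multiset.map_map, ← hA.roots_charpoly_eq_eigenvalues, h,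
      roots_prod _ _ (by simp [Finset.prod_ne_zero_iff, X_sub_C_ne_zero])]
    simp
  have hmultiset := Multiset.map_injective Complex.ofReal_injective hroots
  simpa [Multiset.map_map, Finset.sum_map_val] using congrArg (fun s => (s.map g).sum) hmultiset

theorem Matrix.IsHermitian.kronecker {m n : Type*} {A : Matrix m m ℂ} {B : Matrix n n ℂ}
    (hA : A.IsHermitian) (hB : B.IsHermitian) : (A ⊗ₖ B).IsHermitian := by
  rw [IsHermitian, conjTranspose_kronecker, hA.eq, hB.eq]

open Polynomial in
theorem Matrix.IsHermitian.charpoly_kronecker {m n : Type*} [Fintype m] [DecidableEq m]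
    [Fintype n] [DecidableEq n] {A : Matrix m m ℂ} {B : Matrix n n ℂ}
    (hA : A.IsHermitian) (hB : B.IsHermitian) :
    (A ⊗ₖ B).charpoly =
      ∏ p : m × n, (X - C ((hA.eigenvalues p.1 * hB.eigenvalues p.2 : ℝ) : ℂ)) := by
  set U : Matrix m m ℂ := ↑hA.eigenvectorUnitary
  set V : Matrix n n ℂ := ↑hB.eigenvectorUnitary
  have hUV : star (U ⊗ₖ V) * (U ⊗ₖ V) = 1 :=
    Unitary.star_mul_self_of_mem
      (kronecker_mem_unitary hA.eigenvectorUnitary.2 hB.eigenvectorUnitary.2)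
  -- `charpoly (W * D * star W) = charpoly (star W * W * D)` with `W = U ⊗ₖ V` unitary
  conv_lhs =>
    rw [hA.spectral_theorem, hB.spectral_theorem, Unitary.conjStarAlgAut_apply,
      Unitary.conjStarAlgAut_apply, mul_kronecker_mul, mul_kronecker_mul, star_eq_conjTranspose,
      star_eq_conjTranspose, ← conjTranspose_kronecker, ← star_eq_conjTranspose,
      charpoly_mul_comm, ← mul_assoc, hUV, one_mul, diagonal_kronecker_diagonal,
      charpoly_diagonal]
  simp

-- No sign condition: `Real.log` is `log |x|`, so `log (x * y) = log x + log y` for `x, y ≠ 0`.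
theorem entEta_mul (x y : ℝ) : entEta (x * y) = y * entEta x + x * entEta y := by
  rcases eq_or_ne x 0 with rfl | hx
  · simp [entEta]
  rcases eq_or_ne y 0 with rfl | hy
  · simp [entEta]
  rw [entEta, entEta, entEta, Real.log_mul hx hy]
  ring

theorem Matrix.IsHermitian.re_trace_eq_sum_eigenvalues {n : Type*} [Fintype n] [DecidableEq n]
    {A : Matrix n n ℂ} (hA : A.IsHermitian) : A.trace.re = ∑ i, hA.eigenvalues i := by
  simp [hA.trace_eq_sum_eigenvalues]

theorem vnEntropy_kronecker_s0 {m n : Type*} [Fintype m] [DecidableEq m] [Fintype n]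
    [DecidableEq n] {A : Matrix m m ℂ} {B : Matrix n n ℂ}
    (hA : A.IsHermitian) (hB : B.IsHermitian) :
    vnEntropy (A ⊗ₖ B) = B.trace.re * vnEntropy A + A.trace.re * vnEntropy B := by
  have hAB := hA.kronecker hB
  rw [vnEntropy, vnEntropy, vnEntropy, dif_pos hAB, dif_pos hA, dif_pos hB,
    hAB.sum_comp_eigenvalues_eq_of_charpoly_eq (hA.charpoly_kronecker hB),
    hA.re_trace_eq_sum_eigenvalues, hB.re_trace_eq_sum_eigenvalues, Fintype.sum_prod_type]
  simp only [entEta_mul, Finset.sum_add_distrib, ← Finset.sum_mul, ← Finset.mul_sum]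

theorem vnEntropy_kronecker_of_trace_eq_one {m n : Type*} [Fintype m] [DecidableEq m]
    [Fintype n] [DecidableEq n] {A : Matrix m m ℂ} {B : Matrix n n ℂ}
    (hA : A.IsHermitian) (hB : B.IsHermitian) (hA₁ : A.trace = 1) (hB₁ : B.trace = 1) :
    vnEntropy (A ⊗ₖ B) = vnEntropy A + vnEntropy B := by
  simp [vnEntropy_kronecker_s0 hA hB, hA₁, hB₁]

section Pinch

variable {I α : Type*} [DecidableEq α]

theorem isHermitian_pinch (f : I → α) {M : Matrix I I ℂ} (hM : M.IsHermitian) :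
    (pinch f M).IsHermitian := by
  ext i j
  by_cases hf : f i = f j
  · simp [pinch, hf, ← hM.apply i j]
  · simp [pinch, hf, Ne.symm hf]

theorem trace_pinch [Fintype I] (f : I → α) (M : Matrix I I ℂ) : (pinch f M).trace = M.trace := by
  simp [trace, pinch]

theorem pinch_kronecker {J β : Type*} [DecidableEq β] (f : I → α) (g : J → β)
    (A : Matrix I I ℂ) (B : Matrix J J ℂ) :
    pinch (fun p => (f p.1, g p.2)) (A ⊗ₖ B) = pinch f A ⊗ₖ pinch g B := by
  ext ⟨i, j⟩ ⟨k, l⟩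
  by_cases hf : f i = f k <;> by_cases hg : g j = g l <;> simp [pinch, hf, hg]

end Pinch

/-- the mutual asymmetry equals the entropy gap between local and
global dephasing of the product state. -/
theorem mutual_asymmetry_eq_entropy_gap {s r : ℕ}
    (ρS : Matrix (Fin s) (Fin s) ℂ) (ρR : Matrix (Fin r) (Fin r) ℂ)
    (ES : Fin s → ℤ) (ER : Fin r → ℤ)
    (hS : IsDensityMatrix ρS) (hR : IsDensityMatrix ρR) :
    asym ES ρS + asym ER ρR - asym (globalE ES ER) (ρS ⊗ₖ ρR) =
      vnEntropy (pinch (localE ES ER) (ρS ⊗ₖ ρR)) -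
        vnEntropy (pinch (globalE ES ER) (ρS ⊗ₖ ρR)) := by
  obtain ⟨hSh, -, hS₁⟩ := hS
  obtain ⟨hRh, -, hR₁⟩ := hR
  have hproduct := vnEntropy_kronecker_of_trace_eq_one hSh hRh hS₁ hR₁
  have hlocal : vnEntropy (pinch (localE ES ER) (ρS ⊗ₖ ρR)) =
      vnEntropy (pinch ES ρS) + vnEntropy (pinch ER ρR) := by
    have := vnEntropy_kronecker_of_trace_eq_one (isHermitian_pinch ES hSh)
      (isHermitian_pinch ER hRh) ((trace_pinch ES ρS).trans hS₁) ((trace_pinch ER ρR).trans hR₁)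
    rwa [← pinch_kronecker] at this
  rw [asym, asym, asym, hproduct, hlocal]
  ring
end

section
/- Let I be a finite index type, ρ a density matrix on I, and f : I → α, g : I → β functions such that the partition induced by g refines the partition induced by f (i.e. for all i, j, g i = g j implies f i = f j). Then pinching by the finer partition does not decrease the von Neumann entropy: S(P_g ρ) ≥ S(P_f ρ). In particular (taking f constant) S(P_g ρ) ≥ S(ρ), and on a bipartite system S(Δρ) ≥ S(Πρ). -/
open Matrix Kronecker BigOperators ComplexOrder

/-! The pinching is the Kraus map `A ↦ ∑_c P_c A P_c` over the fibre projections `P_c` of `g`,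
and `∑ P_c P_cᴴ = ∑ P_cᴴ P_c = 1`. For any Kraus map `A ↦ ∑_c K_c A K_cᴴ` normalised this way,
writing `A = U diag(λ) Uᴴ` and its image as `V diag(μ) Vᴴ` gives `μ = W λ` with
`W i j = ∑_c ‖(Vᴴ K_c U) i j‖²`, a doubly stochastic matrix; Jensen's inequality for the concave
`η`, applied row by row, then yields `∑ η(λ) ≤ ∑ η(μ)`. A finer pinching factors through a coarser
one, whose output is again positive semidefinite. -/

open Finset

theorem ConcaveOn.sum_map_le_sum_map_mulVec_of_mem_doublyStochastic {R n : Type*} [Field R]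
    [LinearOrder R] [IsStrictOrderedRing R] [Fintype n] [DecidableEq n] {s : Set R} {φ : R → R}
    (hφ : ConcaveOn R s φ) {W : Matrix n n R} (hW : W ∈ doublyStochastic R n) {x : n → R}
    (hx : ∀ j, x j ∈ s) : ∑ j, φ (x j) ≤ ∑ i, φ ((W *ᵥ x) i) :=
  calc ∑ j, φ (x j) = ∑ j, (∑ i, W i j) * φ (x j) := by
        simp only [sum_col_of_mem_doublyStochastic hW, one_mul]
    _ = ∑ i, ∑ j, W i j • φ (x j) := by
        simp only [sum_mul, smul_eq_mul]
        exact sum_comm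
    _ ≤ ∑ i, φ (∑ j, W i j • x j) := sum_le_sum fun i _ =>
        hφ.le_map_sum (fun _ _ => nonneg_of_mem_doublyStochastic hW)
          (sum_row_of_mem_doublyStochastic hW i) fun j _ => hx j
    _ = ∑ i, φ ((W *ᵥ x) i) := by simp only [mulVec, dotProduct, smul_eq_mul]

section NormSq

variable {𝕜 n ι : Type*} [RCLike 𝕜] [Fintype n]

lemma mul_conjTranspose_apply_self (M : Matrix n n 𝕜) (i : n) :
    (M * Mᴴ) i i = ∑ j, ((‖M i j‖ ^ 2 : ℝ) : 𝕜) := by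
  simp only [mul_apply, conjTranspose_apply, RCLike.star_def, RCLike.mul_conj]
  push_cast
  rfl

lemma conjTranspose_mul_apply_self (M : Matrix n n 𝕜) (j : n) :
    (Mᴴ * M) j j = ∑ i, ((‖M i j‖ ^ 2 : ℝ) : 𝕜) := by
  simpa using mul_conjTranspose_apply_self Mᴴ j

lemma sum_norm_sq_mem_doublyStochastic [DecidableEq n] {s : Finset ι} {M : ι → Matrix n n 𝕜}
    (hrow : ∑ c ∈ s, M c * (M c)ᴴ = 1) (hcol : ∑ c ∈ s, (M c)ᴴ * M c = 1) :
    (of fun i j => ∑ c ∈ s, ‖M c i j‖ ^ 2) ∈ doublyStochastic ℝ n := by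
  refine mem_doublyStochastic_iff_sum.2 ⟨fun i j => sum_nonneg fun c _ => sq_nonneg _,
    fun i => ?_, fun j => ?_⟩
  · have h := congr_fun₂ hrow i i
    simp only [Matrix.sum_apply, mul_conjTranspose_apply_self, one_apply_eq] at h
    rw [sum_comm] at h
    exact_mod_cast h
  · have h := congr_fun₂ hcol j j
    simp only [Matrix.sum_apply, conjTranspose_mul_apply_self, one_apply_eq] at h
    rw [sum_comm] at h
    exact_mod_cast h

variable [DecidableEq n]

lemma mul_diagonal_mul_conjTranspose_apply_self (M : Matrix n n 𝕜) (d : n → ℝ) (i : n) :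
    (M * diagonal (fun j => (d j : 𝕜)) * Mᴴ) i i = ∑ j, ((d j * ‖M i j‖ ^ 2 : ℝ) : 𝕜) := by
  rw [mul_apply]
  simp only [mul_diagonal, conjTranspose_apply, RCLike.star_def]
  refine sum_congr rfl fun j _ => ?_
  rw [mul_right_comm, RCLike.mul_conj]
  push_cast
  ring

lemma sum_mul_diagonal_mul_conjTranspose_apply_self (s : Finset ι) (M : ι → Matrix n n 𝕜)
    (d : n → ℝ) (i : n) :
    (∑ c ∈ s, M c * diagonal (fun j => (d j : 𝕜)) * (M c)ᴴ) i i
      = (((of fun i j => ∑ c ∈ s, ‖M c i j‖ ^ 2) *ᵥ d) i : ℝ) := by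
  simp only [Matrix.sum_apply, mul_diagonal_mul_conjTranspose_apply_self, mulVec, dotProduct,
    of_apply, sum_mul]
  push_cast
  rw [sum_comm]
  exact sum_congr rfl fun j _ => sum_congr rfl fun c _ => by ring

end NormSq

section Kraus

variable {𝕜 n ι : Type*} [RCLike 𝕜] [Fintype n] [DecidableEq n]

theorem Matrix.IsHermitian.exists_mem_doublyStochastic_eigenvalues_eq_mulVec
    {A : Matrix n n 𝕜} (hA : A.IsHermitian) {s : Finset ι} {K : ι → Matrix n n 𝕜}
    (hrow : ∑ c ∈ s, K c * (K c)ᴴ = 1) (hcol : ∑ c ∈ s, (K c)ᴴ * K c = 1)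
    (hB : (∑ c ∈ s, K c * A * (K c)ᴴ).IsHermitian) :
    ∃ W ∈ doublyStochastic ℝ n, hB.eigenvalues = W *ᵥ hA.eigenvalues := by
  set U : Matrix n n 𝕜 := ↑hA.eigenvectorUnitary
  set V : Matrix n n 𝕜 := ↑hB.eigenvectorUnitary
  have hU : U * Uᴴ = 1 := Unitary.coe_mul_star_self _
  have hU' : Uᴴ * U = 1 := Unitary.coe_star_mul_self _
  have hV : V * Vᴴ = 1 := Unitary.coe_mul_star_self _
  have hV' : Vᴴ * V = 1 := Unitary.coe_star_mul_self _
  set M : ι → Matrix n n 𝕜 := fun c => Vᴴ * K c * U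
  have hA_eq : A = U * diagonal (fun j => (hA.eigenvalues j : 𝕜)) * Uᴴ := hA.spectral_theorem
  have hB_eq : diagonal (fun i => (hB.eigenvalues i : 𝕜))
      = ∑ c ∈ s, M c * diagonal (fun j => (hA.eigenvalues j : 𝕜)) * (M c)ᴴ := by
    have hB_diag : Vᴴ * (∑ c ∈ s, K c * A * (K c)ᴴ) * V
        = diagonal (fun i => (hB.eigenvalues i : 𝕜)) :=
      (Unitary.conjStarAlgAut_star_apply _ _).symm.trans hB.conjStarAlgAut_star_eigenvectorUnitary
    rw [← hB_diag]
    conv_lhs => rw [hA_eq]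
    simp only [M, Finset.mul_sum, Finset.sum_mul, conjTranspose_mul, conjTranspose_conjTranspose,
      Matrix.mul_assoc]
  refine ⟨of fun i j => ∑ c ∈ s, ‖M c i j‖ ^ 2, sum_norm_sq_mem_doublyStochastic ?_ ?_, ?_⟩
  · calc ∑ c ∈ s, M c * (M c)ᴴ = Vᴴ * (∑ c ∈ s, K c * (K c)ᴴ) * V := by
          simp only [M, Finset.mul_sum, Finset.sum_mul, conjTranspose_mul,
            conjTranspose_conjTranspose, Matrix.mul_assoc, ← Matrix.mul_assoc U, hU, Matrix.one_mul]
      _ = 1 := by rw [hrow, Matrix.mul_one, hV']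
  · calc ∑ c ∈ s, (M c)ᴴ * M c = Uᴴ * (∑ c ∈ s, (K c)ᴴ * K c) * U := by
          simp only [M, Finset.mul_sum, Finset.sum_mul, conjTranspose_mul,
            conjTranspose_conjTranspose, Matrix.mul_assoc, ← Matrix.mul_assoc V, hV, Matrix.one_mul]
      _ = 1 := by rw [hcol, Matrix.mul_one, hU']
  · funext i
    have h := congr_fun₂ hB_eq i i
    rw [diagonal_apply_eq, sum_mul_diagonal_mul_conjTranspose_apply_self] at h
    exact_mod_cast h

theorem vnEntropy_le_vnEntropy_sum_mul_mul_conjTranspose {A : Matrix n n ℂ} (hA : A.PosSemidef)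
    {s : Finset ι} {K : ι → Matrix n n ℂ}
    (hrow : ∑ c ∈ s, K c * (K c)ᴴ = 1) (hcol : ∑ c ∈ s, (K c)ᴴ * K c = 1) :
    vnEntropy A ≤ vnEntropy (∑ c ∈ s, K c * A * (K c)ᴴ) := by
  have hB : (∑ c ∈ s, K c * A * (K c)ᴴ).IsHermitian :=
    (posSemidef_sum s fun c _ => hA.mul_mul_conjTranspose_same (K c)).isHermitian
  obtain ⟨W, hW, hμ⟩ :=
    hA.isHermitian.exists_mem_doublyStochastic_eigenvalues_eq_mulVec hrow hcol hB
  rw [vnEntropy, vnEntropy, dif_pos hA.isHermitian, dif_pos hB, hμ]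
  exact Real.concaveOn_negMulLog.sum_map_le_sum_map_mulVec_of_mem_doublyStochastic hW
    hA.eigenvalues_nonneg

end Kraus

section Pinch

variable {I α β : Type*} [DecidableEq α] [DecidableEq β]

lemma pinch_pinch_of_refines {f : I → α} {g : I → β} (h : ∀ i j, g i = g j → f i = f j)
    (ρ : Matrix I I ℂ) : pinch g (pinch f ρ) = pinch g ρ := by
  ext i j
  by_cases hg : g i = g j <;> simp [pinch, hg, h i j]

variable [DecidableEq I]

def fiberProj (g : I → β) (c : β) : Matrix I I ℂ :=
  diagonal fun i => if g i = c then 1 else 0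

lemma conjTranspose_fiberProj (g : I → β) (c : β) : (fiberProj g c)ᴴ = fiberProj g c := by
  simp [fiberProj, diagonal_conjTranspose, Pi.star_def, apply_ite]

variable [Fintype I]

lemma fiberProj_mul_self (g : I → β) (c : β) : fiberProj g c * fiberProj g c = fiberProj g c := by
  simp [fiberProj, diagonal_mul_diagonal]

lemma sum_fiberProj (g : I → β) : ∑ c ∈ univ.image g, fiberProj g c = 1 := by
  ext i j
  simp [fiberProj, Matrix.sum_apply, diagonal_apply, one_apply]

lemma pinch_eq_sum_fiberProj (g : I → β) (M : Matrix I I ℂ) :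
    pinch g M = ∑ c ∈ univ.image g, fiberProj g c * M * (fiberProj g c)ᴴ := by
  ext i j
  simp [fiberProj, Matrix.sum_apply, pinch]

lemma Matrix.PosSemidef.pinch {ρ : Matrix I I ℂ} (hρ : ρ.PosSemidef) (g : I → β) :
    (pinch g ρ).PosSemidef := by
  rw [pinch_eq_sum_fiberProj]
  exact posSemidef_sum _ fun c _ => hρ.mul_mul_conjTranspose_same _

theorem vnEntropy_le_vnEntropy_pinch {ρ : Matrix I I ℂ} (hρ : ρ.PosSemidef) (g : I → β) :
    vnEntropy ρ ≤ vnEntropy (pinch g ρ) := by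
  have hK : ∑ c ∈ univ.image g, fiberProj g c * (fiberProj g c)ᴴ = 1 := by
    simp only [conjTranspose_fiberProj, fiberProj_mul_self, sum_fiberProj]
  rw [pinch_eq_sum_fiberProj]
  exact vnEntropy_le_vnEntropy_sum_mul_mul_conjTranspose hρ hK
    (by simpa only [conjTranspose_fiberProj] using hK)

theorem vnEntropy_pinch_le_vnEntropy_pinch_of_refines {ρ : Matrix I I ℂ} (hρ : ρ.PosSemidef)
    {f : I → α} {g : I → β} (h : ∀ i j, g i = g j → f i = f j) :
    vnEntropy (pinch f ρ) ≤ vnEntropy (pinch g ρ) :=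
  pinch_pinch_of_refines h ρ ▸ vnEntropy_le_vnEntropy_pinch (hρ.pinch f) g

end Pinch

lemma globalE_eq_of_localE_eq {s r : ℕ} (ES : Fin s → ℤ) (ER : Fin r → ℤ)
    (p q : Fin s × Fin r) (h : localE ES ER p = localE ES ER q) :
    globalE ES ER p = globalE ES ER q := by
  simp only [localE, Prod.mk.injEq] at h
  simp only [globalE, h.1, h.2]

/-- pinching by a finer partition does not decrease the von Neumann
entropy; in particular pinching does not decrease entropy, and S(Δρ) ≥ S(Πρ). -/
theorem vnEntropy_pinch_mono {I : Type*} [Fintype I] [DecidableEq I]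
    {α β : Type*} [DecidableEq α] [DecidableEq β]
    (ρ : Matrix I I ℂ) (hρ : IsDensityMatrix ρ) (f : I → α) (g : I → β)
    (hrefine : ∀ i j, g i = g j → f i = f j) :
    vnEntropy (pinch f ρ) ≤ vnEntropy (pinch g ρ) ∧
    vnEntropy ρ ≤ vnEntropy (pinch g ρ) ∧
    (∀ (s r : ℕ) (σ : Matrix (Fin s × Fin r) (Fin s × Fin r) ℂ), IsDensityMatrix σ →
      ∀ (ES : Fin s → ℤ) (ER : Fin r → ℤ),
        vnEntropy (pinch (globalE ES ER) σ) ≤ vnEntropy (pinch (localE ES ER) σ)) :=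
  ⟨vnEntropy_pinch_le_vnEntropy_pinch_of_refines hρ.2.1 hrefine,
    vnEntropy_le_vnEntropy_pinch hρ.2.1 g,
    fun _ _ _ hσ ES ER =>
      vnEntropy_pinch_le_vnEntropy_pinch_of_refines hσ.2.1 (globalE_eq_of_localE_eq ES ER)⟩
end

section
/- The von Neumann entropy is additive over tensor products: for density matrices ρ on Fin s and σ on Fin r, S(ρ ⊗ σ) = S(ρ) + S(σ), where ⊗ is the Kronecker product of matrices. -/
open Matrix Kronecker BigOperators ComplexOrder

/-!
Diagonalising `ρ = U D U*` and `σ = V E V*` diagonalises `ρ ⊗ₖ σ` by the unitary `U ⊗ₖ V`, so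
the eigenvalues of `ρ ⊗ₖ σ` are the products `pᵢ qⱼ` of those of `ρ` and `σ`, with multiplicity.
Since `η(p q) = q η(p) + p η(q)`, summing over `i, j` with `∑ pᵢ = ∑ qⱼ = 1` gives `S(ρ) + S(σ)`.
-/

open Polynomial

theorem entEta_eq_negMulLog : entEta = Real.negMulLog := rfl

theorem sum_negMulLog_mul_of_sum_eq_one {ι κ : Type*} [Fintype ι] [Fintype κ] {p : ι → ℝ}
    {q : κ → ℝ} (hp : ∑ i, p i = 1) (hq : ∑ j, q j = 1) :
    ∑ x : ι × κ, Real.negMulLog (p x.1 * q x.2) =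
      ∑ i, Real.negMulLog (p i) + ∑ j, Real.negMulLog (q j) := by
  simp only [Fintype.sum_prod_type, Real.negMulLog_mul, Finset.sum_add_distrib, ← Finset.sum_mul,
    ← Finset.mul_sum, hq, one_mul, hp]

theorem roots_prod_X_sub_C_ofReal {𝕜 ι : Type*} [RCLike 𝕜] [Fintype ι] (d : ι → ℝ) :
    (∏ i, (X - C (d i : 𝕜))).roots = Finset.univ.val.map ((↑) ∘ d) := by
  rw [roots_prod _ _ (Finset.prod_ne_zero_iff.mpr fun i _ => X_sub_C_ne_zero _)]
  simp

namespace Matrix.IsHermitian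

theorem kronecker_s7 {𝕜 m n : Type*} [RCLike 𝕜] {A : Matrix m m 𝕜} {B : Matrix n n 𝕜}
    (hA : A.IsHermitian) (hB : B.IsHermitian) : (A ⊗ₖ B).IsHermitian := by
  rw [IsHermitian, conjTranspose_kronecker, hA.eq, hB.eq]

variable {𝕜 m n : Type*} [RCLike 𝕜] [Fintype m] [DecidableEq m] [Fintype n] [DecidableEq n]
  {A : Matrix m m 𝕜} {B : Matrix n n 𝕜}

theorem map_eigenvalues_eq_of_charpoly_eq (hA : A.IsHermitian) {d : m → ℝ}
    (h : A.charpoly = ∏ i, (X - C (d i : 𝕜))) :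
    Finset.univ.val.map hA.eigenvalues = Finset.univ.val.map d := by
  have hroots := hA.roots_charpoly_eq_eigenvalues
  rw [h, roots_prod_X_sub_C_ofReal, ← Multiset.map_map, ← Multiset.map_map] at hroots
  exact Multiset.map_injective RCLike.ofReal_injective hroots.symm

theorem charpoly_kronecker_s7 (hA : A.IsHermitian) (hB : B.IsHermitian) :
    (A ⊗ₖ B).charpoly =
      ∏ p : m × n, (X - C ((hA.eigenvalues p.1 * hB.eigenvalues p.2 : ℝ) : 𝕜)) := by
  let U : unitary (Matrix (m × n) (m × n) 𝕜) :=
    ⟨_, kronecker_mem_unitary hA.eigenvectorUnitary.2 hB.eigenvectorUnitary.2⟩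
  have hAB : A ⊗ₖ B = Unitary.conjStarAlgAut 𝕜 _ U
      (diagonal (RCLike.ofReal ∘ hA.eigenvalues) ⊗ₖ diagonal (RCLike.ofReal ∘ hB.eigenvalues)) := by
    conv_lhs => rw [hA.spectral_theorem, hB.spectral_theorem]
    simp only [Unitary.conjStarAlgAut_apply, mul_kronecker_mul, U, star_eq_conjTranspose,
      conjTranspose_kronecker]
  rw [hAB, Unitary.conjStarAlgAut_apply, charpoly_mul_comm, ← mul_assoc]
  simp [diagonal_kronecker_diagonal, charpoly_diagonal]

theorem sum_comp_eigenvalues_kronecker (hA : A.IsHermitian) (hB : B.IsHermitian) (f : ℝ → ℝ) :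
    ∑ p, f ((hA.kronecker_s7 hB).eigenvalues p) =
      ∑ p : m × n, f (hA.eigenvalues p.1 * hB.eigenvalues p.2) := by
  have h := (hA.kronecker_s7 hB).map_eigenvalues_eq_of_charpoly_eq (hA.charpoly_kronecker_s7 hB)
  simpa only [Multiset.map_map, Function.comp_def, Finset.sum_map_val] using
    congrArg (fun s => (s.map f).sum) h

theorem sum_eigenvalues_eq_one (hA : A.IsHermitian) (htr : A.trace = 1) :
    ∑ i, hA.eigenvalues i = 1 := by
  have h := hA.trace_eq_sum_eigenvalues
  rw [htr] at h
  exact_mod_cast h.symm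

end Matrix.IsHermitian

/-- von Neumann entropy is additive over tensor (Kronecker) products. -/
theorem vnEntropy_kronecker {s r : ℕ}
    (ρ : Matrix (Fin s) (Fin s) ℂ) (σ : Matrix (Fin r) (Fin r) ℂ)
    (hρ : IsDensityMatrix ρ) (hσ : IsDensityMatrix σ) :
    vnEntropy (ρ ⊗ₖ σ) = vnEntropy ρ + vnEntropy σ := by
  rw [vnEntropy, dif_pos (hρ.1.kronecker_s7 hσ.1), vnEntropy, dif_pos hρ.1, vnEntropy, dif_pos hσ.1,
    hρ.1.sum_comp_eigenvalues_kronecker hσ.1, entEta_eq_negMulLog]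
  exact sum_negMulLog_mul_of_sum_eq_one (hρ.1.sum_eigenvalues_eq_one hρ.2.2)
    (hσ.1.sum_eigenvalues_eq_one hσ.2.2)
end

section
/- (High coherence order.) Let d ≥ 2, s = r = d with E_S(m) = m and E_R(n) = n. Let ρ_S be the d×d matrix with (ρ_S)_{m m'} = 1/2 if m, m' ∈ {0, d−1} and 0 otherwise (the state (|0⟩ + |d−1⟩)/√2, exhibiting coherence of order d−1), and let ρ_R be the d×d matrix with all entries 1/d. Then the mutual asymmetry is A(ρ_S) + A(ρ_R) − A(ρ_S ⊗ ρ_R) = (log 2)/d. -/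
open Matrix Kronecker BigOperators ComplexOrder

/-!
The three states `ρ_S`, `ρ_R` and `ρ_S ⊗ ρ_R` are pure: each is the projector onto a uniform
superposition of the basis vectors indexed by a finite set `s`, so their entropies vanish.
Dephasing such a state by `f` keeps the diagonal together with the blocks of basis vectors of
equal `f`-value. Locally `E_S`, `E_R` are injective, giving the maximally mixed states on
`{0, d-1}` and on all of `Fin d`, of entropies `log 2` and `log d`. Globally the `2d` basis
vectors `(m, n)`, `m ∈ {0, d-1}`, have pairwise distinct energies `m + n` except for the pair
`(0, d-1)`, `(d-1, 0)`, so `Πρ` has the eigenvalue `1/d` once and `1/(2d)` with multiplicity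
`2d - 2`, and entropy `log (2d) - (log 2)/d`.

No eigenvalue is computed explicitly: if `p(ρ) = 0` then all eigenvalues of `ρ` are roots of `p`,
and `S(ρ) = tr q(ρ)` for any polynomial `q` interpolating `η` at these roots.
-/

open Polynomial Finset

namespace Matrix.IsHermitian
variable {n 𝕜 : Type*} [Fintype n] [DecidableEq n] [RCLike 𝕜] {A : Matrix n n 𝕜}

theorem isRoot_eigenvalues_of_aeval_eq_zero (hA : A.IsHermitian) {p : ℝ[X]}
    (hp : aeval A p = 0) (i : n) : p.IsRoot (hA.eigenvalues i) := by
  have : Nonempty n := ⟨i⟩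
  have := spectrum.subset_polynomial_aeval A p ⟨_, hA.eigenvalues_mem_spectrum_real i, rfl⟩
  rwa [hp, spectrum.zero_eq, Set.mem_singleton_iff] at this

theorem trace_aeval (hA : A.IsHermitian) (q : ℝ[X]) :
    (aeval A q).trace = ∑ i, ((q.eval (hA.eigenvalues i) : ℝ) : 𝕜) := by
  rw [← cfc_polynomial q A hA.isSelfAdjoint, hA.cfc_eq, IsHermitian.cfc,
    Unitary.conjStarAlgAut_apply, trace_mul_cycle, Unitary.coe_star_mul_self, one_mul]
  simp [trace]

end Matrix.IsHermitian

section Entropy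
variable {n : Type*} [Fintype n] [DecidableEq n]

theorem vnEntropy_eq_re_trace_aeval {ρ : Matrix n n ℂ} (hρ : ρ.IsHermitian) {p q : ℝ[X]}
    (hp : aeval ρ p = 0) (hq : ∀ x, p.IsRoot x → entEta x = q.eval x) :
    vnEntropy ρ = (aeval ρ q).trace.re := by
  rw [vnEntropy, dif_pos hρ, hρ.trace_aeval, ← RCLike.ofReal_sum, ← RCLike.re_to_complex,
    RCLike.ofReal_re]
  exact sum_congr rfl fun i _ => hq _ (hρ.isRoot_eigenvalues_of_aeval_eq_zero hp i)

theorem vnEntropy_of_mul_self_eq_smul {ρ : Matrix n n ℂ} (hρ : ρ.IsHermitian) {a : ℝ}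
    (h : ρ * ρ = a • ρ) : vnEntropy ρ = -Real.log a * ρ.trace.re := by
  have hp : aeval ρ (X * (X - C a)) = 0 := by
    simp [mul_sub, h, Algebra.algebraMap_eq_smul_one]
  rw [vnEntropy_eq_re_trace_aeval hρ hp (q := C (-Real.log a) * X)]
  · simp [Algebra.algebraMap_eq_smul_one, trace_smul]
  · intro x hx
    simp only [IsRoot.def, eval_mul, eval_X, eval_sub, eval_C, mul_eq_zero, sub_eq_zero] at hx
    rcases hx with hx | hx <;> simp [hx, entEta]; ring

theorem vnEntropy_add_of_mul_eq_zero {A B : Matrix n n ℂ} (hAB : (A + B).IsHermitian) {a b : ℝ}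
    (hA : A * A = a • A) (hB : B * B = b • B) (hAB₀ : A * B = 0) (hBA₀ : B * A = 0) :
    vnEntropy (A + B) = -Real.log a * A.trace.re - Real.log b * B.trace.re := by
  have hsq : (A + B) * (A + B) = a • A + b • B := by
    rw [add_mul, mul_add, mul_add, hA, hB, hAB₀, hBA₀, add_zero, zero_add]
  by_cases hab : a = b
  · subst hab
    rw [vnEntropy_of_mul_self_eq_smul hAB (by rw [hsq, smul_add]), trace_add, Complex.add_re]
    ring
  -- `C c₁ * X + C c₂ * X ^ 2` interpolates `entEta` at the possible eigenvalues `0, a, b`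
  set c₂ := (Real.log a - Real.log b) / (b - a)
  set c₁ := -Real.log a - c₂ * a
  have hc₁a : c₁ + c₂ * a = -Real.log a := by ring
  have hc₁b : c₁ + c₂ * b = -Real.log b := by
    have : b - a ≠ 0 := sub_ne_zero.mpr (Ne.symm hab)
    simp only [c₁, c₂]; field_simp; ring
  have hp : aeval (A + B) (X * (X - C a) * (X - C b)) = 0 := by
    have h₁ : (A + B) * (A + B - a • 1) = (b - a) • B := by
      rw [mul_sub, hsq, Matrix.mul_smul, mul_one]; module
    simp only [map_mul, map_sub, aeval_X, aeval_C, Algebra.algebraMap_eq_smul_one, h₁]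
    rw [smul_mul, mul_sub, mul_add, hBA₀, hB, Matrix.mul_smul, mul_one, zero_add, sub_self,
      smul_zero]
  have hq :
      aeval (A + B) (C c₁ * X + C c₂ * X ^ 2) = (-Real.log a) • A + (-Real.log b) • B := by
    simp only [map_add, map_mul, aeval_C, aeval_X, Algebra.algebraMap_eq_smul_one, smul_mul_assoc,
      one_mul, sq, hsq, ← hc₁a, ← hc₁b]
    module
  rw [vnEntropy_eq_re_trace_aeval hAB hp (q := C c₁ * X + C c₂ * X ^ 2), hq]
  · simp [trace_smul, sub_eq_add_neg]
  · intro x hx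
    simp only [IsRoot.def, eval_mul, eval_X, eval_sub, eval_C, mul_eq_zero, sub_eq_zero] at hx
    simp only [entEta, eval_add, eval_mul, eval_C, eval_X, eval_pow]
    rcases hx with (hx | hx) | hx <;> rw [hx]
    · ring
    · linear_combination (-a) * hc₁a
    · linear_combination (-b) * hc₁b

end Entropy

section UniformStates
variable {ι : Type*} [DecidableEq ι]

def onesOn (s : Finset ι) : Matrix ι ι ℂ := of fun i j => if i ∈ s ∧ j ∈ s then 1 else 0

def diagOn (s : Finset ι) : Matrix ι ι ℂ := diagonal fun i => if i ∈ s then 1 else 0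

/-- The pure state `|ψ⟩⟨ψ|`, `ψ = (#s)^(-1/2) ∑_{i ∈ s} |i⟩`. -/
noncomputable def uniformState (s : Finset ι) : Matrix ι ι ℂ := (#s : ℝ)⁻¹ • onesOn s

theorem onesOn_isHermitian (s : Finset ι) : (onesOn s).IsHermitian := by
  ext i j; simp [onesOn, and_comm]

theorem onesOn_kronecker {κ : Type*} [DecidableEq κ] (s : Finset ι) (t : Finset κ) :
    onesOn s ⊗ₖ onesOn t = onesOn (s ×ˢ t) := by
  ext ⟨i, k⟩ ⟨j, l⟩
  simp only [onesOn, kroneckerMap_apply, of_apply, mem_product]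
  split_ifs <;> simp_all

theorem uniformState_isHermitian (s : Finset ι) : (uniformState s).IsHermitian :=
  (onesOn_isHermitian s).smul (IsSelfAdjoint.all _)

variable [Fintype ι]

theorem onesOn_mul_onesOn (s : Finset ι) : onesOn s * onesOn s = (#s : ℝ) • onesOn s := by
  ext i j
  by_cases hi : i ∈ s <;> by_cases hj : j ∈ s <;> simp [onesOn, mul_apply, hi, hj, sum_ite_mem]

theorem trace_onesOn (s : Finset ι) : (onesOn s).trace = #s := by
  simp [onesOn, trace, sum_ite_mem]

theorem trace_diagOn (s : Finset ι) : (diagOn s).trace = #s := by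
  simp [diagOn, trace, sum_ite_mem]

theorem diagOn_mul_self (s : Finset ι) : diagOn s * diagOn s = diagOn s := by
  simp [diagOn, diagonal_mul_diagonal]

theorem diagOn_mul_onesOn {s t : Finset ι} (h : Disjoint s t) : diagOn s * onesOn t = 0 := by
  ext i j
  by_cases hi : i ∈ s <;> simp [diagOn, onesOn, diagonal_mul, hi, disjoint_left.mp h]

theorem onesOn_mul_diagOn {s t : Finset ι} (h : Disjoint s t) : onesOn t * diagOn s = 0 := by
  ext i j
  by_cases hj : j ∈ s <;> simp [diagOn, onesOn, mul_diagonal, hj, disjoint_left.mp h]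

theorem uniformState_mul_self {s : Finset ι} (hs : s.Nonempty) :
    uniformState s * uniformState s = uniformState s := by
  simp only [uniformState, smul_mul_smul, onesOn_mul_onesOn, smul_smul]
  congr 1
  field_simp [hs.card_ne_zero]

theorem vnEntropy_uniformState {s : Finset ι} (hs : s.Nonempty) :
    vnEntropy (uniformState s) = 0 := by
  rw [vnEntropy_of_mul_self_eq_smul (uniformState_isHermitian s) (a := 1)
    (by rw [one_smul, uniformState_mul_self hs]), Real.log_one]
  ring

omit [Fintype ι] in
theorem uniformState_kronecker {κ : Type*} [DecidableEq κ] (s : Finset ι) (t : Finset κ) :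
    uniformState s ⊗ₖ uniformState t = uniformState (s ×ˢ t) := by
  simp [uniformState, smul_kronecker, kronecker_smul, onesOn_kronecker, smul_smul, mul_comm]

end UniformStates

section Pinching
variable {ι α : Type*} [DecidableEq α] (f : ι → α)

theorem pinch_smul (r : ℝ) (M : Matrix ι ι ℂ) : pinch f (r • M) = r • pinch f M := by
  ext i j; simp [pinch]

theorem pinch_isHermitian {ρ : Matrix ι ι ℂ} (hρ : ρ.IsHermitian) :
    (pinch f ρ).IsHermitian := by
  ext i j
  simp only [pinch, conjTranspose_apply, of_apply, apply_ite star, star_zero, eq_comm (a := f j),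
    hρ.apply]

theorem pinch_onesOn [DecidableEq ι] {s c : Finset ι} (hc : c ⊆ s)
    (hf : ∀ i ∈ s, ∀ j ∈ s, f i = f j ↔ i = j ∨ i ∈ c ∧ j ∈ c) :
    pinch f (onesOn s) = diagOn (s \ c) + onesOn c := by
  ext i j
  simp only [pinch, onesOn, diagOn, of_apply, Matrix.add_apply, diagonal_apply, mem_sdiff]
  by_cases hij : i ∈ s ∧ j ∈ s
  · rw [if_pos hij]
    have hf' := hf i hij.1 j hij.2
    by_cases hi_eq_j : i = j
    · subst hi_eq_j; by_cases hic : i ∈ c <;> simp [hij.1, hic]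
    · by_cases hic : i ∈ c ∧ j ∈ c <;> simp_all
  · have hc' : ¬(i ∈ c ∧ j ∈ c) := fun h => hij ⟨hc h.1, hc h.2⟩
    rw [if_neg hij, if_neg hc']
    split_ifs <;> simp_all

theorem asym_uniformState [Fintype ι] [DecidableEq ι] {s c : Finset ι} (hs : s.Nonempty)
    (hc : c ⊆ s)
    (hf : ∀ i ∈ s, ∀ j ∈ s, f i = f j ↔ i = j ∨ i ∈ c ∧ j ∈ c) :
    asym f (uniformState s) = Real.log #s - #c / #s * Real.log #c := by
  have hN : (#s : ℝ) ≠ 0 := by exact_mod_cast hs.card_ne_zero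
  have hpinch :
      pinch f (uniformState s) =
        (#s : ℝ)⁻¹ • diagOn (s \ c) + (#s : ℝ)⁻¹ • onesOn c := by
    rw [uniformState, pinch_smul, pinch_onesOn f hc hf, smul_add]
  have hdisj : Disjoint (s \ c) c := sdiff_disjoint
  have hS := vnEntropy_add_of_mul_eq_zero
    (hpinch ▸ pinch_isHermitian f (uniformState_isHermitian s))
    (a := (#s : ℝ)⁻¹) (b := (#s : ℝ)⁻¹ * #c)
    (by rw [smul_mul_smul, diagOn_mul_self, smul_smul])
    (by rw [smul_mul_smul, onesOn_mul_onesOn, smul_smul, smul_smul]; ring_nf)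
    (by rw [smul_mul_smul, diagOn_mul_onesOn hdisj, smul_zero])
    (by rw [smul_mul_smul, onesOn_mul_diagOn hdisj, smul_zero])
  have htA : ((#s : ℝ)⁻¹ • diagOn (s \ c)).trace.re = (#s - #c) / #s := by
    rw [trace_smul, trace_diagOn, Complex.real_smul, Complex.re_ofReal_mul, Complex.natCast_re,
      card_sdiff_of_subset hc, Nat.cast_sub (card_le_card hc), inv_mul_eq_div]
  have htB : ((#s : ℝ)⁻¹ • onesOn c).trace.re = #c / #s := by
    rw [trace_smul, trace_onesOn, Complex.real_smul, Complex.re_ofReal_mul, Complex.natCast_re,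
      inv_mul_eq_div]
  rw [asym, vnEntropy_uniformState hs, hpinch, hS, htA, htB, Real.log_inv]
  rcases eq_or_ne (#c : ℝ) 0 with hk | hk
  · simp [hk, hN]
  · rw [Real.log_mul (inv_ne_zero hN) hk, Real.log_inv]
    field_simp
    ring

theorem asym_uniformState_of_injOn [Fintype ι] [DecidableEq ι] {s : Finset ι} (hs : s.Nonempty)
    (hf : Set.InjOn f s) : asym f (uniformState s) = Real.log #s := by
  rw [asym_uniformState f hs (empty_subset s) (c := ∅)]
  · simp
  · intro i hi j hj
    simpa using hf.eq_iff hi hj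

end Pinching

section HighCoherence
variable {d : ℕ}

def edgeLevels (d : ℕ) : Finset (Fin d) := {m | m.val = 0 ∨ m.val = d - 1}

def collisionPairs (d : ℕ) : Finset (Fin d × Fin d) :=
  {p ∈ edgeLevels d ×ˢ univ | p.1.val + p.2.val = d - 1}

theorem edgeLevels_eq (hd : 2 ≤ d) :
    edgeLevels d = {⟨0, by omega⟩, ⟨d - 1, by omega⟩} := by
  ext m; simp [edgeLevels, Fin.ext_iff]

theorem card_edgeLevels (hd : 2 ≤ d) : #(edgeLevels d) = 2 := by
  rw [edgeLevels_eq hd, card_pair]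
  simp [Fin.ext_iff]; omega

theorem collisionPairs_eq (hd : 2 ≤ d) :
    collisionPairs d =
      {(⟨0, by omega⟩, ⟨d - 1, by omega⟩), (⟨d - 1, by omega⟩, ⟨0, by omega⟩)} := by
  ext ⟨m, n⟩; simp [collisionPairs, edgeLevels, Fin.ext_iff]; omega

theorem collisionPairs_subset : collisionPairs d ⊆ edgeLevels d ×ˢ univ :=
  filter_subset _ _

theorem card_collisionPairs (hd : 2 ≤ d) : #(collisionPairs d) = 2 := by
  rw [collisionPairs_eq hd, card_pair]
  simp [Fin.ext_iff]; omega

theorem globalE_val_eq_iff {p q : Fin d × Fin d} (hp : p ∈ edgeLevels d ×ˢ univ)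
    (hq : q ∈ edgeLevels d ×ˢ univ) :
    globalE (fun m => (m.val : ℤ)) (fun n => (n.val : ℤ)) p =
        globalE (fun m => (m.val : ℤ)) (fun n => (n.val : ℤ)) q ↔
      p = q ∨ p ∈ collisionPairs d ∧ q ∈ collisionPairs d := by
  obtain ⟨⟨m, hm⟩, ⟨n, hn⟩⟩ := p
  obtain ⟨⟨m', hm'⟩, ⟨n', hn'⟩⟩ := q
  simp only [edgeLevels, collisionPairs, mem_product, mem_filter, mem_univ, and_true] at hp hq ⊢
  simp only [globalE, Prod.ext_iff, Fin.mk.injEq, hp, hq, and_self, true_and]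
  omega

theorem system_eq_uniformState (hd : 2 ≤ d) :
    (of fun m m' : Fin d =>
        if (m.val = 0 ∨ m.val = d - 1) ∧ (m'.val = 0 ∨ m'.val = d - 1) then (1 / 2 : ℂ)
        else 0) =
      uniformState (edgeLevels d) := by
  rw [uniformState, card_edgeLevels hd]
  ext m m'
  simp [onesOn, edgeLevels]

theorem clock_eq_uniformState : (of fun _ _ : Fin d => 1 / (d : ℂ)) = uniformState univ := by
  ext m m'
  simp [uniformState, onesOn]

end HighCoherence

/-- high coherence order: for the system state (|0⟩ + |d−1⟩)/√2 of
coherence order d−1 and the maximally coherent clock of dimension d, the mutual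
asymmetry is (log 2)/d. -/
theorem high_coherence_order (d : ℕ) (hd : 2 ≤ d)
    (ρS : Matrix (Fin d) (Fin d) ℂ)
    (hρS : ρS = Matrix.of fun m m' =>
      if (m.val = 0 ∨ m.val = d - 1) ∧ (m'.val = 0 ∨ m'.val = d - 1) then 1 / 2 else 0)
    (ρR : Matrix (Fin d) (Fin d) ℂ) (hρR : ρR = Matrix.of fun _ _ => 1 / (d : ℂ))
    (ES : Fin d → ℤ) (hES : ES = fun m => (m.val : ℤ))
    (ER : Fin d → ℤ) (hER : ER = fun n => (n.val : ℤ)) :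
    asym ES ρS + asym ER ρR - asym (globalE ES ER) (ρS ⊗ₖ ρR) = Real.log 2 / d := by
  subst hρS hρR hES hER
  have : NeZero d := ⟨by omega⟩
  have hEdge : (edgeLevels d).Nonempty := card_pos.mp (by rw [card_edgeLevels hd]; norm_num)
  have hval : Function.Injective fun m : Fin d => (m.val : ℤ) :=
    Nat.cast_injective.comp Fin.val_injective
  rw [system_eq_uniformState hd, clock_eq_uniformState, uniformState_kronecker,
    asym_uniformState_of_injOn _ hEdge hval.injOn,
    asym_uniformState_of_injOn _ univ_nonempty hval.injOn,
    asym_uniformState _ (hEdge.product univ_nonempty) collisionPairs_subset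
      fun _ hp _ hq => globalE_val_eq_iff hp hq,
    card_product, card_edgeLevels hd, card_univ, Fintype.card_fin, card_collisionPairs hd]
  push_cast
  rw [Real.log_mul two_ne_zero (by positivity)]
  field_simp
  ring
end

section
/- (Schrödinger dynamics from the Page–Wootters constraint.) Let H_S ∈ M_{Fin s}(ℂ) and H_R ∈ M_{Fin r}(ℂ) be Hermitian matrices and let ψ : Fin s × Fin r → ℂ satisfy the constraint (H_S ⊗ 1 + 1 ⊗ H_R) ψ = 0, i.e. for all (m,n): ∑_{m'} (H_S)_{m m'} ψ(m',n) + ∑_{n'} (H_R)_{n n'} ψ(m,n') = 0. Fix φ₀ : Fin r → ℂ and for t ∈ ℝ let φ(t) = exp(−i·t·H_R) ·ᵥ φ₀ (matrix exponential applied to φ₀), and define the relative state ψ_S(t) : Fin s → ℂ by ψ_S(t)(m) = ∑_n conj(φ(t)(n)) · ψ(m,n). Then for every t ∈ ℝ, the function t ↦ ψ_S(t) is differentiable with derivative −i · (H_S ·ᵥ ψ_S(t)); equivalently, ψ_S satisfies the Schrödinger equation i·(d/dt)ψ_S(t) = H_S ·ᵥ ψ_S(t). -/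
/-!
Write `⟨φ|ψ⟩` for the relative state `m ↦ ∑ n, conj (φ n) * ψ (m, n)`; it is conjugate-linear in
the clock state `φ`, so `d/dt ⟨φ(t)|ψ⟩ = ⟨φ'(t)|ψ⟩ = ⟨-i H_R φ(t)|ψ⟩ = i ⟨H_R φ(t)|ψ⟩`.
Since `H_R` is Hermitian, `⟨H_R φ|ψ⟩ = ⟨φ|(1 ⊗ H_R) ψ⟩`, and the constraint turns `(1 ⊗ H_R) ψ`
into `-(H_S ⊗ 1) ψ`, whence `⟨H_R φ|ψ⟩ = -H_S ⟨φ|ψ⟩`.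
-/

open Matrix

theorem Matrix.hasDerivAt_exp_smul_mulVec {ι : Type*} [Fintype ι] [DecidableEq ι]
    (A : Matrix ι ι ℂ) (v : ι → ℂ) {u : ℝ → ℂ} {u' : ℂ} {t : ℝ} (hu : HasDerivAt u u' t) :
    HasDerivAt (fun t => NormedSpace.exp (u t • A) *ᵥ v)
      (u' • A *ᵥ (NormedSpace.exp (u t • A) *ᵥ v)) t := by
  -- Any normed-algebra structure induces the product topology, which is all the statement sees.
  let : NormedRing (Matrix ι ι ℂ) := Matrix.linftyOpNormedRing
  let : NormedAlgebra ℂ (Matrix ι ι ℂ) := Matrix.linftyOpNormedAlgebra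
  let applyTo : Matrix ι ι ℂ →L[ℝ] ι → ℂ :=
    (LinearMap.toContinuousLinearMap ((mulVecBilin ℂ ℂ).flip v)).restrictScalars ℝ
  rw [mulVec_mulVec, ← smul_mulVec]
  exact applyTo.hasFDerivAt.comp_hasDerivAt t ((hasDerivAt_exp_smul_const' A (u t)).scomp t hu)

namespace PageWootters

variable {σ ρ : Type*} [Fintype ρ]

def relativeState (ψ : σ × ρ → ℂ) (φ : ρ → ℂ) : σ → ℂ :=
  fun m => ∑ n, star (φ n) * ψ (m, n)

theorem relativeState_smul (ψ : σ × ρ → ℂ) (c : ℂ) (φ : ρ → ℂ) :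
    relativeState ψ (c • φ) = star c • relativeState ψ φ := by
  ext m
  simp only [relativeState, Pi.smul_apply, smul_eq_mul, star_mul', Finset.mul_sum, mul_assoc]

theorem relativeState_mulVec_of_constraint [Fintype σ] {HS : Matrix σ σ ℂ} {HR : Matrix ρ ρ ℂ}
    (hHR : HR.IsHermitian) {ψ : σ × ρ → ℂ}
    (hconstraint : ∀ m n, (∑ m', HS m m' * ψ (m', n)) + ∑ n', HR n n' * ψ (m, n') = 0)
    (φ : ρ → ℂ) :
    relativeState ψ (HR *ᵥ φ) = -(HS *ᵥ relativeState ψ φ) := by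
  ext m
  have hHR_ψ : ∀ k, ∑ n, HR k n * ψ (m, n) = -∑ m', HS m m' * ψ (m', k) :=
    fun k => eq_neg_of_add_eq_zero_right (hconstraint m k)
  calc relativeState ψ (HR *ᵥ φ) m
      = ∑ k, star (φ k) * ∑ n, HR k n * ψ (m, n) := by
        simp only [relativeState, mulVec, dotProduct, star_sum, star_mul', Finset.sum_mul,
          Finset.mul_sum, hHR.apply]
        rw [Finset.sum_comm]
        exact Finset.sum_congr rfl fun _ _ => Finset.sum_congr rfl fun _ _ => by ring
    _ = -(HS *ᵥ relativeState ψ φ) m := by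
        simp only [hHR_ψ, relativeState, mulVec, dotProduct, Finset.mul_sum, mul_neg,
          Finset.sum_neg_distrib]
        rw [Finset.sum_comm]
        exact congrArg Neg.neg <|
          Finset.sum_congr rfl fun _ _ => Finset.sum_congr rfl fun _ _ => by ring

theorem hasDerivAt_relativeState (ψ : σ × ρ → ℂ) {φ : ℝ → ρ → ℂ} {φ' : ρ → ℂ} {t : ℝ}
    (hφ : HasDerivAt φ φ' t) :
    HasDerivAt (fun t => relativeState ψ (φ t)) (relativeState ψ φ') t :=
  hasDerivAt_pi.mpr fun m =>
    HasDerivAt.fun_sum fun n _ => ((hasDerivAt_pi.mp hφ n).star).mul_const (ψ (m, n))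

end PageWootters

open PageWootters in
theorem page_wootters_schrodinger_general {s r : ℕ}
    (HS : Matrix (Fin s) (Fin s) ℂ) (HR : Matrix (Fin r) (Fin r) ℂ)
    (hHR : HR.IsHermitian)
    (ψ : Fin s × Fin r → ℂ)
    (hconstraint : ∀ (m : Fin s) (n : Fin r),
      (∑ m', HS m m' * ψ (m', n)) + ∑ n', HR n n' * ψ (m, n') = 0)
    (φ₀ : Fin r → ℂ)
    (φ : ℝ → Fin r → ℂ)
    (hφ : ∀ t : ℝ, φ t = (NormedSpace.exp ((-(Complex.I * (t : ℂ))) • HR)).mulVec φ₀)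
    (ψS : ℝ → Fin s → ℂ)
    (hψS : ∀ (t : ℝ) (m : Fin s), ψS t m = ∑ n, (starRingEnd ℂ) (φ t n) * ψ (m, n)) :
    ∀ t : ℝ, HasDerivAt ψS ((-Complex.I) • HS.mulVec (ψS t)) t := by
  intro t
  have hψS_eq : ψS = fun t => relativeState ψ (φ t) := funext fun t => funext (hψS t)
  have hclock : HasDerivAt φ (-Complex.I • HR *ᵥ φ t) t := by
    have hphase : HasDerivAt (fun t : ℝ => -(Complex.I * t)) (-Complex.I) t := by
      simpa using ((hasDerivAt_id t).ofReal_comp.const_mul Complex.I).fun_neg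
    rw [funext hφ]
    exact hasDerivAt_exp_smul_mulVec HR φ₀ hphase
  have hschrodinger := hasDerivAt_relativeState ψ hclock
  rw [relativeState_smul, relativeState_mulVec_of_constraint hHR hconstraint] at hschrodinger
  rw [hψS_eq]
  simpa using hschrodinger

/-- Schrödinger dynamics from the Page–Wootters constraint: the
relative state ψ_S(t) = ⟨φ(t)|ψ⟩ of the system with respect to the clock satisfies
the Schrödinger equation with Hamiltonian H_S. -/
theorem page_wootters_schrodinger {s r : ℕ}
    (HS : Matrix (Fin s) (Fin s) ℂ) (HR : Matrix (Fin r) (Fin r) ℂ)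
    (hHS : HS.IsHermitian) (hHR : HR.IsHermitian)
    (ψ : Fin s × Fin r → ℂ)
    (hconstraint : ∀ (m : Fin s) (n : Fin r),
      (∑ m', HS m m' * ψ (m', n)) + ∑ n', HR n n' * ψ (m, n') = 0)
    (φ₀ : Fin r → ℂ)
    (φ : ℝ → Fin r → ℂ)
    (hφ : ∀ t : ℝ, φ t = (NormedSpace.exp ((-(Complex.I * (t : ℂ))) • HR)).mulVec φ₀)
    (ψS : ℝ → Fin s → ℂ)
    (hψS : ∀ (t : ℝ) (m : Fin s), ψS t m = ∑ n, (starRingEnd ℂ) (φ t n) * ψ (m, n)) :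
    ∀ t : ℝ, HasDerivAt ψS ((-Complex.I) • HS.mulVec (ψS t)) t :=
  page_wootters_schrodinger_general HS HR hHR ψ hconstraint φ₀ φ hφ ψS hψS
end

section
/- (Liouville–von Neumann form of the internal dynamics.) Under the hypotheses of the Page–Wootters constraint (H_S, H_R Hermitian, ψ : Fin s × Fin r → ℂ with (H_S ⊗ 1 + 1 ⊗ H_R)ψ = 0, φ(t) = exp(−i·t·H_R) ·ᵥ φ₀, ψ_S(t)(m) = ∑_n conj(φ(t)(n))·ψ(m,n)), define ρ_S(t) ∈ M_{Fin s}(ℂ) by ρ_S(t)_{m m'} = ψ_S(t)(m) · conj(ψ_S(t)(m')). Then for every t ∈ ℝ, the matrix-valued function t ↦ ρ_S(t) is differentiable with derivative i·(ρ_S(t)·H_S − H_S·ρ_S(t)), i.e. ρ_S evolves by the Liouville–von Neumann equation (d/dt)ρ_S(t) = i·[ρ_S(t), H_S] with respect to the clock time t. -/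
/-! Viewing `ψ` as an `s × r` matrix `Ψ`, the constraint reads `H_S Ψ + Ψ H_Rᵀ = 0`. The clock
state solves `φ' = -i H_R φ`, and since `H_R` is Hermitian, `conj φ' = i H_Rᵀ (conj φ)`; the
constraint then moves `H_Rᵀ` across `Ψ`, so the relative state `ψ_S = Ψ (conj φ)` solves the
Schrödinger equation `ψ_S' = -i H_S ψ_S`. The product rule for the rank-one matrix
`ρ_S = ψ_S ψ_Sᴴ`, together with `(H_S ψ_S)ᴴ = ψ_Sᴴ H_S`, gives `ρ_S' = i (ρ_S H_S - H_S ρ_S)`. -/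

open Matrix BigOperators

section

open Complex

/- The operator norm is only needed inside the proof: the statement involves no matrix norm, so
it does not clash with the entrywise norm used further down. -/
attribute [local instance] Matrix.linftyOpNormedRing Matrix.linftyOpNormedAlgebra in
theorem hasDerivAt_exp_neg_I_mul_smul_mulVec {n : Type*} [Fintype n] [DecidableEq n]
    (A : Matrix n n ℂ) (v : n → ℂ) (t : ℝ) :
    HasDerivAt (fun t : ℝ => NormedSpace.exp ((-(I * t)) • A) *ᵥ v)
      (-I • (A *ᵥ (NormedSpace.exp ((-(I * t)) • A) *ᵥ v))) t := by
  have hlin : HasDerivAt (fun t : ℝ => -(I * t)) (-I) t := by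
    simpa using ((hasDerivAt_id t).ofReal_comp.const_mul I).fun_neg
  have hexp := (hasDerivAt_exp_smul_const' A (-(I * t))).scomp t hlin
  have hcomp := (((mulVecBilin ℂ ℂ).flip v).toContinuousLinearMap.restrictScalars ℝ).hasFDerivAt
    |>.comp_hasDerivAt t hexp
  -- the ascription unifies the two module structures on `n → ℂ`
  have hmulVec : HasDerivAt (fun t : ℝ => NormedSpace.exp ((-(I * t)) • A) *ᵥ v)
      ((-I • (A * NormedSpace.exp ((-(I * t)) • A))) *ᵥ v) t := hcomp
  rwa [smul_mulVec, ← mulVec_mulVec] at hmulVec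

theorem HasDerivAt.const_mulVec {𝕜 m n : Type*} [RCLike 𝕜] [Fintype m] [Fintype n]
    (A : Matrix m n 𝕜) {f : ℝ → n → 𝕜} {f' : n → 𝕜} {t : ℝ} (hf : HasDerivAt f f' t) :
    HasDerivAt (fun t => A *ᵥ f t) (A *ᵥ f') t :=
  (A.mulVecLin.toContinuousLinearMap.restrictScalars ℝ).hasFDerivAt.comp_hasDerivAt t hf

theorem hasDerivAt_mulVec_star_of_mul_add_mul_transpose_eq_zero {m n : Type*} [Fintype m]
    [Fintype n] {Ψ : Matrix m n ℂ} {HS : Matrix m m ℂ} {HR : Matrix n n ℂ}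
    (hHR : HR.IsHermitian) (hΨ : HS * Ψ + Ψ * HRᵀ = 0) {φ : ℝ → n → ℂ} {t : ℝ}
    (hφ : HasDerivAt φ (-I • (HR *ᵥ φ t)) t) :
    HasDerivAt (fun t => Ψ *ᵥ star (φ t)) (-I • (HS *ᵥ (Ψ *ᵥ star (φ t)))) t := by
  have hstar : star (-I • (HR *ᵥ φ t)) = I • (HRᵀ *ᵥ star (φ t)) := by
    rw [star_smul, star_mulVec, hHR.eq, ← vecMul_transpose HRᵀ, transpose_transpose]
    simp
  have hΨ' : Ψ * HRᵀ = -(HS * Ψ) := eq_neg_of_add_eq_zero_right hΨ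
  convert hφ.star.const_mulVec Ψ using 1
  rw [hstar, mulVec_smul, mulVec_mulVec, mulVec_mulVec, hΨ', neg_mulVec, smul_neg, neg_smul]

end

attribute [local instance] Matrix.normedAddCommGroup Matrix.normedSpace

theorem HasDerivAt.vecMulVec {𝕜 m n : Type*} [RCLike 𝕜] [Fintype m] [Fintype n]
    {u : ℝ → m → 𝕜} {v : ℝ → n → 𝕜} {u' : m → 𝕜} {v' : n → 𝕜} {t : ℝ}
    (hu : HasDerivAt u u' t) (hv : HasDerivAt v v' t) :
    HasDerivAt (fun t => vecMulVec (u t) (v t)) (vecMulVec u' (v t) + vecMulVec (u t) v') t :=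
  hasDerivAt_pi.2 fun i => hasDerivAt_pi.2 fun j =>
    (hasDerivAt_pi.1 hu i).fun_mul (hasDerivAt_pi.1 hv j)

open Complex in
theorem hasDerivAt_vecMulVec_star_of_schrodinger {n : Type*} [Fintype n] {H : Matrix n n ℂ}
    (hH : H.IsHermitian) {u : ℝ → n → ℂ} {t : ℝ} (hu : HasDerivAt u (-I • (H *ᵥ u t)) t) :
    HasDerivAt (fun t => vecMulVec (u t) (star (u t)))
      (I • (vecMulVec (u t) (star (u t)) * H - H * vecMulVec (u t) (star (u t)))) t := by
  convert hu.vecMulVec hu.star using 1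
  rw [star_smul, star_mulVec, hH.eq, star_neg, Complex.star_def, Complex.conj_I, smul_vecMulVec,
    vecMulVec_smul, ← mul_vecMulVec, ← vecMulVec_mul]
  module

/-- Liouville–von Neumann form of the internal dynamics: the density
matrix ρ_S(t) = |ψ_S(t)⟩⟨ψ_S(t)| of the relative state evolves by
(d/dt) ρ_S(t) = i·[ρ_S(t), H_S] with respect to the clock time t. -/
theorem page_wootters_liouville_von_neumann {s r : ℕ}
    (HS : Matrix (Fin s) (Fin s) ℂ) (HR : Matrix (Fin r) (Fin r) ℂ)
    (hHS : HS.IsHermitian) (hHR : HR.IsHermitian)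
    (ψ : Fin s × Fin r → ℂ)
    (hconstraint : ∀ (m : Fin s) (n : Fin r),
      (∑ m', HS m m' * ψ (m', n)) + ∑ n', HR n n' * ψ (m, n') = 0)
    (φ₀ : Fin r → ℂ)
    (φ : ℝ → Fin r → ℂ)
    (hφ : ∀ t : ℝ, φ t = (NormedSpace.exp ((-(Complex.I * (t : ℂ))) • HR)).mulVec φ₀)
    (ψS : ℝ → Fin s → ℂ)
    (hψS : ∀ (t : ℝ) (m : Fin s), ψS t m = ∑ n, (starRingEnd ℂ) (φ t n) * ψ (m, n))
    (ρS : ℝ → Matrix (Fin s) (Fin s) ℂ)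
    (hρS : ∀ (t : ℝ) (m m' : Fin s), ρS t m m' = ψS t m * (starRingEnd ℂ) (ψS t m')) :
    ∀ t : ℝ, HasDerivAt ρS (Complex.I • (ρS t * HS - HS * ρS t)) t := by
  intro t
  set Ψ : Matrix (Fin s) (Fin r) ℂ := of fun m n => ψ (m, n)
  have hΨ : HS * Ψ + Ψ * HRᵀ = 0 := by
    ext m n
    simpa [Ψ, mul_apply, mul_comm] using hconstraint m n
  obtain rfl : ρS = fun t => vecMulVec (ψS t) (star (ψS t)) := by
    ext t m m'
    simp [hρS, vecMulVec_apply]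
  obtain rfl : ψS = fun t => Ψ *ᵥ star (φ t) := by
    ext t m
    simp [hψS, mulVec, dotProduct, Ψ, mul_comm]
  obtain rfl : φ = fun t : ℝ => NormedSpace.exp ((-(Complex.I * t)) • HR) *ᵥ φ₀ := funext hφ
  exact hasDerivAt_vecMulVec_star_of_schrodinger hHS
    (hasDerivAt_mulVec_star_of_mul_add_mul_transpose_eq_zero hHR hΨ
      (hasDerivAt_exp_neg_I_mul_smul_mulVec HR φ₀ t))
end
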